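/- Let n > 1 be an odd integer and let B be any n×n matrix all of whose entries are 0 or 1. Then per(B) · per(J_n − B) ≤ (((n−1)/2)!)^{2n/(n−1)} · (((n+1)/2)!)^{2n/(n+1)}, where J_n is the n×n all-ones matrix. -/

import Mathlib

open Nat Matrix

/-- The permanent of a square integer matrix. -/
def perm {n : ℕ} (M : Matrix (Fin n) (Fin n) ℤ) : ℤ :=
  ∑ σ : Equiv.Perm (Fin n), ∏ i, M i (σ i)

/-- The `n×n` all-ones matrix. -/
def Jmat (n : ℕ) : Matrix (Fin n) (Fin n) ℤ :=
  Matrix.of fun _ _ => 1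

/- Let `φ r = log (r!) / r`. A (0,1)-matrix with row supports `R i` has as permanent the number of
bijections `e` with `e i ∈ R i` for all `i`, and `J - B` has the complementary supports. Brégman's
theorem `per ≤ exp (∑ i, φ |R i|)`, proved by Schrijver's argument (induct on the size, split the
matchings by the entry they use in a row, apply Jensen's inequality for `x log x` and double count),
gives `per B · per (J - B) ≤ exp ∑ i, (φ r_i + φ (n - r_i))`. When neither permanent vanishes,
`1 ≤ r_i ≤ n - 1`; since `φ` is concave on `r ≥ 1`, each summand is then at most `φ m + φ (m + 1)`
for `n = 2m + 1`, and `exp (n (φ m + φ (m + 1)))` is exactly the right-hand side. -/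

open Finset

noncomputable def logFactorialAvg (r : ℕ) : ℝ := Real.log r ! / r

lemma logFactorialAvg_nonneg (r : ℕ) : 0 ≤ logFactorialAvg r :=
  div_nonneg (Real.log_nonneg (mod_cast r.factorial_pos)) r.cast_nonneg

lemma natCast_mul_logFactorialAvg (r : ℕ) : r * logFactorialAvg r = Real.log r ! := by
  rcases r.eq_zero_or_pos with rfl | hr
  · simp
  · exact mul_div_cancel₀ _ (by positivity)

lemma log_factorial_succ (k : ℕ) : Real.log (k + 1)! = Real.log (k + 1) + Real.log k ! := by
  rw [factorial_succ, cast_mul, Real.log_mul (by positivity) (by positivity)]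
  push_cast
  ring

lemma le_two_mul_sub_log_factorial (k : ℕ) :
    (k : ℝ) ≤ 2 * (k * Real.log (k + 1) - Real.log k !) := by
  induction k with
  | zero => simp
  | succ k ih =>
    have hk : (0 : ℝ) < k + 1 := by positivity
    have hlog : 1 - (k + 1) / (k + 2) ≤ Real.log (k + 2) - Real.log (k + 1) := by
      have := Real.one_sub_inv_le_log_of_pos (x := (k + 2) / (k + 1)) (by positivity)
      rwa [inv_div, Real.log_div (by positivity) hk.ne'] at this
    have hstep : 1 ≤ 2 * ((k + 1) * (Real.log (k + 2) - Real.log (k + 1))) := by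
      have : 2 * ((k + 1) * (1 - (k + 1) / (k + 2))) = 2 * (k + 1) / ((k : ℝ) + 2) := by
        field_simp
        ring
      calc (1 : ℝ) ≤ 2 * (k + 1) / (k + 2) := by rw [le_div_iff₀ (by positivity)]; linarith
        _ ≤ _ := by rw [← this]; gcongr
    push_cast
    rw [log_factorial_succ, show (k : ℝ) + 1 + 1 = k + 2 by ring]
    linear_combination ih + hstep

lemma logFactorialAvg_add_two_add_le (k : ℕ) (hk : 1 ≤ k) :
    logFactorialAvg (k + 2) + logFactorialAvg k ≤ 2 * logFactorialAvg (k + 1) := by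
  have hk' : (0 : ℝ) < k := mod_cast hk
  suffices h : 2 * Real.log k ! + k * (k + 1) * Real.log (k + 2) ≤
      k * (k + 3) * Real.log (k + 1) by
    unfold logFactorialAvg
    rw [log_factorial_succ, show k + 2 = k + 1 + 1 by rfl, log_factorial_succ]
    push_cast
    rw [show (k : ℝ) + 1 + 1 = k + 2 by ring, div_add_div _ _ (by positivity) hk'.ne',
      mul_div_assoc', div_le_div_iff₀ (by positivity) (by positivity)]
    linear_combination h
  have hlog : Real.log (k + 2) ≤ Real.log (k + 1) + 1 / (k + 1) := by
    have := Real.log_le_sub_one_of_pos (x := (k + 2) / (k + 1)) (by positivity)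
    rw [Real.log_div (by positivity) (by positivity)] at this
    convert (sub_le_iff_le_add'.mp this) using 2
    field_simp
    ring
  calc 2 * Real.log k ! + k * (k + 1) * Real.log (k + 2)
      ≤ 2 * Real.log k ! + k * (k + 1) * (Real.log (k + 1) + 1 / (k + 1)) := by gcongr
    _ = 2 * Real.log k ! + k + k * (k + 1) * Real.log (k + 1) := by field_simp; ring
    _ ≤ k * (k + 3) * Real.log (k + 1) := by linear_combination le_two_mul_sub_log_factorial k

lemma add_le_of_concave {f : ℕ → ℝ} (hf : ∀ k, 1 ≤ k → f (k + 2) + f k ≤ 2 * f (k + 1))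
    {m r : ℕ} (hr : 1 ≤ r) (hrm : r ≤ 2 * m) : f r + f (2 * m + 1 - r) ≤ f m + f (m + 1) := by
  have hdiff : AntitoneOn (fun k => f (k + 1) - f k) (Set.Ici 1) :=
    antitoneOn_nat_Ici_of_succ_le fun k hk => by linarith [hf k hk]
  -- moving the pair `r < 2m+1-r` one step inwards does not decrease the sum
  have inward : ∀ d r, 1 ≤ r → r + d = m → f r + f (2 * m + 1 - r) ≤ f m + f (m + 1) := by
    intro d
    induction d with
    | zero =>
      intro r _ hrd
      obtain rfl : r = m := hrd
      rw [show 2 * r + 1 - r = r + 1 by omega]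
    | succ d ih =>
      intro r hr hrd
      have hstep := hdiff (Set.mem_Ici.mpr hr) (Set.mem_Ici.mpr (by omega : 1 ≤ 2 * m - r))
        (by omega : r ≤ 2 * m - r)
      have := ih (r + 1) (by omega) (by omega)
      rw [show 2 * m + 1 - (r + 1) = 2 * m - r by omega] at this
      rw [show 2 * m + 1 - r = 2 * m - r + 1 by omega]
      simp only at hstep
      linarith
  rcases le_or_gt r m with h | h
  · exact inward (m - r) r hr (by omega)
  · have := inward (r - m - 1) (2 * m + 1 - r) (by omega) (by omega)
    rwa [show 2 * m + 1 - (2 * m + 1 - r) = r by omega, add_comm] at this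

lemma mul_log_sum_le {α : Type*} (s : Finset α) (t : α → ℝ) (ht : ∀ a ∈ s, 0 ≤ t a) :
    (∑ a ∈ s, t a) * Real.log (∑ a ∈ s, t a) ≤
      (∑ a ∈ s, t a) * Real.log #s + ∑ a ∈ s, t a * Real.log (t a) := by
  rcases (sum_nonneg ht).eq_or_lt with hT | hT
  · have hz := (sum_eq_zero_iff_of_nonneg ht).mp hT.symm
    rw [← hT, sum_eq_zero fun a ha => by rw [hz a ha, zero_mul]]
    simp
  set T := ∑ a ∈ s, t a
  have hs : (0 : ℝ) < #s := mod_cast card_pos.mpr (nonempty_of_sum_ne_zero hT.ne')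
  -- Gibbs: `t log t ≥ t log a + t - a` with `a = T / #s`, summed over `s`
  have gibbs : ∀ a ∈ s, t a * Real.log (T / #s) + t a - T / #s ≤ t a * Real.log (t a) := by
    intro a ha
    rcases (ht a ha).eq_or_lt with h | h
    · rw [← h, zero_mul, zero_mul, zero_add, zero_sub, neg_nonpos]; positivity
    have := Real.one_sub_inv_le_log_of_pos (x := t a / (T / #s)) (by positivity)
    rw [Real.log_div h.ne' (by positivity), inv_div] at this
    have := mul_le_mul_of_nonneg_left this h.le
    rw [mul_sub, mul_one, mul_div_cancel₀ _ h.ne', mul_sub] at this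
    linarith
  have := sum_le_sum gibbs
  rw [sum_sub_distrib, sum_add_distrib, ← sum_mul, sum_const, nsmul_eq_mul,
    mul_div_cancel₀ _ hs.ne', Real.log_div hT.ne' hs.ne'] at this
  linarith

lemma log_card_add_sum_logFactorialAvg_card_erase {κ : Type*} [Fintype κ] [DecidableEq κ]
    {s : Finset κ} {a : κ} (ha : a ∈ s) :
    Real.log #s + ∑ k ∈ univ.erase a, logFactorialAvg #(s.erase k) =
      Fintype.card κ * logFactorialAvg #s := by
  have hs : 1 ≤ #s := card_pos.mpr ⟨a, ha⟩
  have hsplit : ∑ k, logFactorialAvg #(s.erase k) =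
      #s * logFactorialAvg (#s - 1) + (Fintype.card κ - #s) * logFactorialAvg #s := by
    have hin : ∑ k ∈ s, logFactorialAvg #(s.erase k) = ∑ k ∈ s, logFactorialAvg (#s - 1) :=
      sum_congr rfl fun k hk => by rw [card_erase_of_mem hk]
    have hout : ∑ k ∈ sᶜ, logFactorialAvg #(s.erase k) = ∑ k ∈ sᶜ, logFactorialAvg #s :=
      sum_congr rfl fun k hk => by rw [erase_eq_of_notMem (mem_compl.mp hk)]
    rw [← sum_add_sum_compl s, hin, hout, sum_const, sum_const, card_compl, nsmul_eq_mul,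
      nsmul_eq_mul, cast_sub (card_le_univ s)]
  have hfac : Real.log (#s)! = Real.log #s + (#s - 1) * logFactorialAvg (#s - 1) := by
    rw [← Nat.mul_factorial_pred (by omega : #s ≠ 0), cast_mul,
      Real.log_mul (by positivity) (by positivity), ← natCast_mul_logFactorialAvg, cast_sub hs,
      cast_one]
  rw [sum_erase_eq_sub (mem_univ a), hsplit, card_erase_of_mem ha]
  linear_combination -hfac - natCast_mul_logFactorialAvg (#s)

section PerfectMatchings

universe u v

variable {ι : Type u} {κ : Type v} [DecidableEq κ] {R : ι → Finset κ}

def minor (R : ι → Finset κ) (i : ι) (k : κ) : {j // j ≠ i} → Finset {c // c ≠ k} :=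
  fun j => ((R j).erase k).subtype (· ≠ k)

lemma card_minor (i : ι) (k : κ) (j : {j // j ≠ i}) : #(minor R i k j) = #((R j).erase k) := by
  rw [minor, card_subtype, filter_true_of_mem fun c hc => (mem_erase.mp hc).1]

variable [Fintype ι] [DecidableEq ι] [Fintype κ]

def perfectMatchings (R : ι → Finset κ) : Finset (ι ≃ κ) := {e | ∀ i, e i ∈ R i}

@[simp]
lemma mem_perfectMatchings {e : ι ≃ κ} : e ∈ perfectMatchings R ↔ ∀ i, e i ∈ R i := by
  simp [perfectMatchings]

lemma card_filter_apply_eq_card_perfectMatchings_minor {i : ι} {k : κ} (hk : k ∈ R i) :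
    #{e ∈ perfectMatchings R | e i = k} = #(perfectMatchings (minor R i k)) := by
  have hne {e : ι ≃ κ} (he : e ∈ {e ∈ perfectMatchings R | e i = k}) (j : ι) :
      j ≠ i ↔ e j ≠ k := by
    rw [← (mem_filter.mp he).2, e.injective.ne_iff]
  let extend (f : {j // j ≠ i} ≃ {c // c ≠ k}) : ι ≃ κ :=
    ((Equiv.optionSubtypeNe i).symm.trans f.optionCongr).trans (Equiv.optionSubtypeNe k)
  have extend_self (f) : extend f i = k := by simp [extend]
  have extend_ne (f) (j : ι) (hj : j ≠ i) : extend f j = f ⟨j, hj⟩ := by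
    simp [extend, Equiv.optionSubtypeNe_symm_of_ne hj]
  refine card_bij' (fun e he => e.subtypeEquiv (hne he)) (fun f _ => extend f) ?_ ?_ ?_ ?_
  · intro e he
    refine mem_perfectMatchings.mpr fun ⟨j, hj⟩ => ?_
    simpa [minor, (hne he j).mp hj] using mem_perfectMatchings.mp (mem_filter.mp he).1 j
  · intro f hf
    refine mem_filter.mpr ⟨mem_perfectMatchings.mpr fun j => ?_, extend_self f⟩
    by_cases hj : j = i
    · subst hj; rwa [extend_self]
    · have := mem_perfectMatchings.mp hf ⟨j, hj⟩
      simp only [minor, mem_subtype, mem_erase] at this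
      rw [extend_ne f j hj]
      exact this.2
  · intro e he
    ext j
    by_cases hj : j = i
    · subst hj; rw [extend_self, (mem_filter.mp he).2]
    · rw [extend_ne _ j hj]; rfl
  · intro f hf
    ext j
    simp [extend_ne f j.1 j.2]

lemma log_card_filter_apply_eq_le {i : ι} {k : κ} (hk : k ∈ R i)
    (hminor : (#(perfectMatchings (minor R i k)) : ℝ) ≤
      Real.exp (∑ j, logFactorialAvg #(minor R i k j))) :
    Real.log #{e ∈ perfectMatchings R | e i = k} ≤
      ∑ j ∈ univ.erase i, logFactorialAvg #((R j).erase k) := by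
  have hsum : ∑ j, logFactorialAvg #(minor R i k j) =
      ∑ j ∈ univ.erase i, logFactorialAvg #((R j).erase k) := by
    simp only [card_minor]
    exact (sum_subtype _ (by simp) fun j => logFactorialAvg #((R j).erase k)).symm
  rw [card_filter_apply_eq_card_perfectMatchings_minor hk, ← hsum]
  rcases (#(perfectMatchings (minor R i k))).eq_zero_or_pos with h | h
  · rw [h, cast_zero, Real.log_zero]
    exact sum_nonneg fun j _ => logFactorialAvg_nonneg _
  · exact (Real.log_le_iff_le_exp (mod_cast h)).mpr hminor

lemma card_mul_log_card_le (i : ι) :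
    (#(perfectMatchings R) : ℝ) * Real.log #(perfectMatchings R) ≤
      #(perfectMatchings R) * Real.log #(R i) +
        ∑ e ∈ perfectMatchings R, Real.log #{f ∈ perfectMatchings R | f i = e i} := by
  have hmaps : ∀ e ∈ perfectMatchings R, e i ∈ R i := fun e he => mem_perfectMatchings.mp he i
  have hcard :
      (#(perfectMatchings R) : ℝ) = ∑ k ∈ R i, (#{f ∈ perfectMatchings R | f i = k} : ℝ) :=
    mod_cast card_eq_sum_card_fiberwise hmaps
  have hfib : ∑ e ∈ perfectMatchings R, Real.log #{f ∈ perfectMatchings R | f i = e i} =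
      ∑ k ∈ R i, (#{f ∈ perfectMatchings R | f i = k} : ℝ) *
        Real.log #{f ∈ perfectMatchings R | f i = k} := by
    rw [← sum_fiberwise_of_maps_to hmaps]
    refine sum_congr rfl fun k _ => ?_
    rw [sum_congr rfl fun e he => by rw [(mem_filter.mp he).2], sum_const, nsmul_eq_mul]
  rw [hfib, hcard]
  exact mul_log_sum_le _ _ fun k _ => cast_nonneg _

lemma sum_log_card_filter_apply_eq_le
    (hminor : ∀ i k, (#(perfectMatchings (minor R i k)) : ℝ) ≤
      Real.exp (∑ j, logFactorialAvg #(minor R i k j)))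
    {e : ι ≃ κ} (he : e ∈ perfectMatchings R) :
    ∑ i, Real.log #{f ∈ perfectMatchings R | f i = e i} ≤
      ∑ j, (Fintype.card ι * logFactorialAvg #(R j) - Real.log #(R j)) := by
  have he' := mem_perfectMatchings.mp he
  calc ∑ i, Real.log #{f ∈ perfectMatchings R | f i = e i}
      ≤ ∑ i, ∑ j ∈ univ.erase i, logFactorialAvg #((R j).erase (e i)) :=
        sum_le_sum fun i _ => log_card_filter_apply_eq_le (he' i) (hminor i (e i))
    _ = ∑ j, ∑ i ∈ univ.erase j, logFactorialAvg #((R j).erase (e i)) :=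
        sum_comm' fun i j => by simp [and_comm, eq_comm]
    _ = ∑ j, ∑ k ∈ univ.erase (e j), logFactorialAvg #((R j).erase k) :=
        sum_congr rfl fun j _ => sum_equiv e (by simp) fun _ _ => rfl
    _ = ∑ j, (Fintype.card ι * logFactorialAvg #(R j) - Real.log #(R j)) := by
        refine sum_congr rfl fun j _ => ?_
        rw [Fintype.card_congr e, ← log_card_add_sum_logFactorialAvg_card_erase (he' j)]
        ring

lemma card_perfectMatchings_le_of_minor
    (hminor : ∀ i k, (#(perfectMatchings (minor R i k)) : ℝ) ≤
      Real.exp (∑ j, logFactorialAvg #(minor R i k j))) :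
    (#(perfectMatchings R) : ℝ) ≤ Real.exp (∑ i, logFactorialAvg #(R i)) := by
  rcases isEmpty_or_nonempty ι with hι | hι
  · simpa using card_le_one.mpr fun e _ f _ => Equiv.ext isEmptyElim
  set p := #(perfectMatchings R)
  rcases p.eq_zero_or_pos with hp | hp
  · rw [hp, cast_zero]; positivity
  have hp' : (0 : ℝ) < p := mod_cast hp
  set N := Fintype.card ι
  have hN : (0 : ℝ) < N := mod_cast Fintype.card_pos
  have key : (N : ℝ) * (p * Real.log p) ≤ N * (p * ∑ i, logFactorialAvg #(R i)) :=
    calc (N : ℝ) * (p * Real.log p) = ∑ _i : ι, p * Real.log p := by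
          rw [sum_const, Finset.card_univ, nsmul_eq_mul]
      _ ≤ ∑ i, (p * Real.log #(R i) +
            ∑ e ∈ perfectMatchings R, Real.log #{f ∈ perfectMatchings R | f i = e i}) :=
          sum_le_sum fun i _ => card_mul_log_card_le i
      _ = p * ∑ i, Real.log #(R i) +
            ∑ e ∈ perfectMatchings R, ∑ i, Real.log #{f ∈ perfectMatchings R | f i = e i} := by
          rw [sum_add_distrib, mul_sum, sum_comm]
      _ ≤ p * ∑ i, Real.log #(R i) +
            ∑ _e ∈ perfectMatchings R, ∑ j, (N * logFactorialAvg #(R j) - Real.log #(R j)) :=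
          add_le_add_right (sum_le_sum fun e he => sum_log_card_filter_apply_eq_le hminor he) _
      _ = N * (p * ∑ i, logFactorialAvg #(R i)) := by
          rw [sum_const, nsmul_eq_mul, sum_sub_distrib, ← mul_sum]
          ring
  rw [← Real.log_le_iff_le_exp hp']
  exact le_of_mul_le_mul_left (le_of_mul_le_mul_left key hN) hp'

theorem card_perfectMatchings_le (R : ι → Finset κ) :
    (#(perfectMatchings R) : ℝ) ≤ Real.exp (∑ i, logFactorialAvg #(R i)) := by
  suffices ∀ N (ι : Type u) (κ : Type v) [Fintype ι] [DecidableEq ι] [Fintype κ] [DecidableEq κ]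
      (R : ι → Finset κ), Fintype.card ι = N →
      (#(perfectMatchings R) : ℝ) ≤ Real.exp (∑ i, logFactorialAvg #(R i)) from
    this _ ι κ R rfl
  intro N
  induction N with
  | zero =>
    intro ι κ _ _ _ _ R hι
    exact card_perfectMatchings_le_of_minor fun i => (Fintype.card_eq_zero_iff.mp hι).elim i
  | succ N ih =>
    intro ι κ _ _ _ _ R hι
    refine card_perfectMatchings_le_of_minor fun i k => ih _ _ _ ?_
    simp [Fintype.card_subtype_compl, hι]

end PerfectMatchings

lemma card_perfectMatchings_mul_compl_le {ι κ : Type*} [Fintype ι] [DecidableEq ι] [Fintype κ]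
    [DecidableEq κ] {m : ℕ} (hκ : Fintype.card κ = 2 * m + 1) (R : ι → Finset κ) :
    (#(perfectMatchings R) : ℝ) * #(perfectMatchings fun i => (R i)ᶜ) ≤
      Real.exp (Fintype.card ι * (logFactorialAvg m + logFactorialAvg (m + 1))) := by
  rcases (perfectMatchings R).eq_empty_or_nonempty with h | ⟨e, he⟩
  · rw [h, card_empty, cast_zero, zero_mul]; positivity
  rcases (perfectMatchings fun i => (R i)ᶜ).eq_empty_or_nonempty with h | ⟨e', he'⟩
  · rw [h, card_empty, cast_zero, mul_zero]; positivity
  have hpair (i : ι) : logFactorialAvg #(R i) + logFactorialAvg #(R i)ᶜ ≤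
      logFactorialAvg m + logFactorialAvg (m + 1) := by
    have h1 : 1 ≤ #(R i) := card_pos.mpr ⟨e i, mem_perfectMatchings.mp he i⟩
    have h2 : 1 ≤ #(R i)ᶜ := card_pos.mpr ⟨e' i, mem_perfectMatchings.mp he' i⟩
    rw [card_compl, hκ] at h2 ⊢
    exact add_le_of_concave logFactorialAvg_add_two_add_le h1 (by omega)
  calc (#(perfectMatchings R) : ℝ) * #(perfectMatchings fun i => (R i)ᶜ)
      ≤ Real.exp (∑ i, logFactorialAvg #(R i)) * Real.exp (∑ i, logFactorialAvg #(R i)ᶜ) :=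
        mul_le_mul (card_perfectMatchings_le R) (card_perfectMatchings_le _) (by positivity)
          (by positivity)
    _ = Real.exp (∑ i, (logFactorialAvg #(R i) + logFactorialAvg #(R i)ᶜ)) := by
        rw [← Real.exp_add, sum_add_distrib]
    _ ≤ Real.exp (∑ _i : ι, (logFactorialAvg m + logFactorialAvg (m + 1))) :=
        Real.exp_le_exp.mpr (sum_le_sum fun i _ => hpair i)
    _ = Real.exp (Fintype.card ι * (logFactorialAvg m + logFactorialAvg (m + 1))) := by
        rw [sum_const, Finset.card_univ, nsmul_eq_mul]

lemma perm_eq_card_perfectMatchings {n : ℕ} (A : Matrix (Fin n) (Fin n) ℤ)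
    (hA : ∀ i j, A i j = 0 ∨ A i j = 1) :
    perm A = #(perfectMatchings fun i => {k | A i k = 1}) := by
  rw [perm, card_eq_sum_ones, cast_sum, perfectMatchings, sum_filter]
  refine sum_congr rfl fun σ _ => ?_
  split_ifs with h
  · exact prod_eq_one fun i _ => by simpa using h i
  · obtain ⟨i, hi⟩ := not_forall.mp h
    exact prod_eq_zero (mem_univ i) ((hA i (σ i)).resolve_right (by simpa using hi))

lemma factorial_rpow_mul_factorial_rpow {n m : ℕ} (hn : n = 2 * m + 1) :
    (((n - 1) / 2)! : ℝ) ^ ((2 * (n : ℝ)) / ((n : ℝ) - 1)) *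
        (((n + 1) / 2)! : ℝ) ^ ((2 * (n : ℝ)) / ((n : ℝ) + 1)) =
      Real.exp (n * (logFactorialAvg m + logFactorialAvg (m + 1))) := by
  have h1 : (n - 1) / 2 = m := by omega
  have h2 : (n + 1) / 2 = m + 1 := by omega
  have e1 : (n : ℝ) - 1 = 2 * m := by rw [hn]; push_cast; ring
  have e2 : (n : ℝ) + 1 = 2 * (m + 1 : ℕ) := by rw [hn]; push_cast; ring
  rw [h1, h2, e1, e2, mul_div_mul_left _ _ two_ne_zero, mul_div_mul_left _ _ two_ne_zero,
    Real.rpow_def_of_pos (mod_cast m.factorial_pos),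
    Real.rpow_def_of_pos (mod_cast (m + 1).factorial_pos), ← Real.exp_add, logFactorialAvg,
    logFactorialAvg]
  ring_nf

theorem stmt_16_general (n : ℕ) (hodd : Odd n) (B : Matrix (Fin n) (Fin n) ℤ)
    (hB : ∀ i j, B i j = 0 ∨ B i j = 1) :
    ((perm B * perm (Jmat n - B) : ℤ) : ℝ) ≤
      ((((n - 1) / 2)! : ℝ)) ^ ((2 * (n : ℝ)) / ((n : ℝ) - 1)) *
        ((((n + 1) / 2)! : ℝ)) ^ ((2 * (n : ℝ)) / ((n : ℝ) + 1)) := by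
  obtain ⟨m, hm⟩ := hodd
  have hJB : ∀ i j, (Jmat n - B) i j = 1 - B i j := fun i j => by simp [Jmat]
  have hB' : ∀ i j, (Jmat n - B) i j = 0 ∨ (Jmat n - B) i j = 1 := by
    intro i j; rcases hB i j with h | h <;> simp [hJB, h]
  have hrows : (fun i => ({k | (Jmat n - B) i k = 1} : Finset (Fin n))) =
      fun i => ({k | B i k = 1} : Finset (Fin n))ᶜ := by
    ext i k; rcases hB i k with h | h <;> simp [hJB, h]
  rw [perm_eq_card_perfectMatchings B hB, perm_eq_card_perfectMatchings _ hB', hrows,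
    factorial_rpow_mul_factorial_rpow hm]
  push_cast
  simpa using
    card_perfectMatchings_mul_compl_le ((Fintype.card_fin n).trans hm) fun i => {k | B i k = 1}

/-- For odd `n > 1` and an `n×n` (0,1)-matrix `B`,
`per(B)·per(Jₙ − B) ≤ (((n−1)/2)!)^{2n/(n−1)} · (((n+1)/2)!)^{2n/(n+1)}`. -/
theorem stmt_16 (n : ℕ) (hn : 1 < n) (hodd : Odd n) (B : Matrix (Fin n) (Fin n) ℤ)
    (hB : ∀ i j, B i j = 0 ∨ B i j = 1) :
    ((perm B * perm (Jmat n - B) : ℤ) : ℝ) ≤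
      ((((n - 1) / 2)! : ℝ)) ^ ((2 * (n : ℝ)) / ((n : ℝ) - 1)) *
        ((((n + 1) / 2)! : ℝ)) ^ ((2 * (n : ℝ)) / ((n : ℝ) + 1)) :=
  stmt_16_general n hodd B hB
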